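/- Define b(a) = (a − 1)√((a + 2)/(3a)) and γ(a) = a + i·b(a) for a > 0, and set g̃(a) = Re( i( −γ(a) + γ(a)³/3 ) ). Then g̃(a) ≤ 0 for all a > 0, with equality if and only if a = 1; moreover g̃(a) → −∞ as a → 0⁺ and as a → ∞. -/
import Mathlib


open Filter

/-- `b(a) = (a − 1)√((a + 2)/(3a))`. -/
noncomputable def bb (a : ℝ) : ℝ := (a - 1) * Real.sqrt ((a + 2) / (3 * a))

/-- The steepest descent contour `γ(a) = a + i b(a)` through the critical point `s₀ = 1`
of `f(s) = i(−s + s³/3)`. -/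
noncomputable def γ (a : ℝ) : ℂ := (a : ℂ) + (bb a : ℂ) * Complex.I

/-- `g̃(a) = Re(i(−γ(a) + γ(a)³/3))`, the real part of `f` along the contour. -/
noncomputable def gTilde (a : ℝ) : ℝ := (Complex.I * (-γ a + γ a ^ 3 / 3)).re

lemma gTilde_eq (a : ℝ) (ha : 0 < a) :
    gTilde a = -(2*(a-1)^2*(2*a+1)^2)/(9*a) * Real.sqrt ((a+2)/(3*a)) := by
  have key : ∀ x y : ℝ, (Complex.I * (-(x + y*Complex.I) + (x + y*Complex.I)^3/3)).re
      = y*(1 - x^2 + y^2/3) := by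
    intro x y
    simp [Complex.mul_re, Complex.mul_im, Complex.add_re, Complex.add_im, pow_succ]
    ring
  have hs : Real.sqrt ((a+2)/(3*a)) ^ 2 = (a+2)/(3*a) := Real.sq_sqrt (by positivity)
  have h1 : gTilde a = bb a * (1 - a^2 + (bb a)^2/3) := key a (bb a)
  rw [h1, bb, mul_pow, hs]
  field_simp
  ring

lemma sqrt_half_le (a : ℝ) (ha : 0 < a) : (1:ℝ)/2 ≤ Real.sqrt ((a+2)/(3*a)) := by
  have h13 : (1:ℝ)/3 ≤ (a+2)/(3*a) := by
    rw [div_le_div_iff₀ (by norm_num) (by positivity)]; linarith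
  calc (1:ℝ)/2 ≤ Real.sqrt (1/3) := by
        rw [show (1:ℝ)/2 = Real.sqrt ((1/2)^2) by rw [Real.sqrt_sq]; norm_num]
        exact Real.sqrt_le_sqrt (by norm_num)
    _ ≤ _ := Real.sqrt_le_sqrt h13

/-- Along the contour, `g̃ ≤ 0`, with equality iff `a = 1`, and `g̃(a) → −∞` both as
`a → 0⁺` and as `a → ∞`. -/
theorem gTilde_nonpos_max_at_one :
    (∀ a : ℝ, 0 < a → gTilde a ≤ 0) ∧
    (∀ a : ℝ, 0 < a → (gTilde a = 0 ↔ a = 1)) ∧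
    Tendsto gTilde (nhdsWithin 0 (Set.Ioi 0)) atBot ∧
    Tendsto gTilde atTop atBot := by
  refine ⟨?_, ?_, ?_, ?_⟩
  · intro a ha
    rw [gTilde_eq a ha]
    apply mul_nonpos_of_nonpos_of_nonneg
    · apply div_nonpos_of_nonpos_of_nonneg <;> nlinarith [sq_nonneg (a-1), sq_nonneg (2*a+1)]
    · exact Real.sqrt_nonneg _
  · intro a ha
    rw [gTilde_eq a ha]
    constructor
    · intro h
      rcases mul_eq_zero.1 h with h1 | h2
      · have : (a-1)^2 * (2*a+1)^2 = 0 := by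
          field_simp at h1
          nlinarith [h1]
        rcases mul_eq_zero.1 this with h3 | h4
        · nlinarith [pow_eq_zero_iff (n := 2) (by norm_num) |>.1 h3]
        · nlinarith [pow_eq_zero_iff (n := 2) (by norm_num) |>.1 h4]
      · have := sqrt_half_le a ha; linarith
    · rintro rfl; norm_num
  · -- a → 0⁺ : for 0 < a ≤ 1/2, gTilde a ≤ -1/(18a)
    apply tendsto_atBot_mono' _ (show ∀ᶠ a in nhdsWithin 0 (Set.Ioi 0), gTilde a ≤ -(1/(18*a)) from ?_)
    · -- tendsto (fun a => -(1/(18*a))) → atBot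
      rw [tendsto_neg_atBot_iff]
      have : Tendsto (fun a : ℝ => 18 * a) (nhdsWithin 0 (Set.Ioi 0)) (nhdsWithin 0 (Set.Ioi 0)) := by
        apply tendsto_nhdsWithin_of_tendsto_nhds_of_eventually_within
        · have : Tendsto (fun a : ℝ => 18 * a) (nhds 0) (nhds (18 * 0)) :=
            (continuous_const.mul continuous_id).tendsto 0
          simpa using this.mono_left nhdsWithin_le_nhds
        · filter_upwards [self_mem_nhdsWithin] with a ha
          simp only [Set.mem_Ioi] at ha ⊢
          linarith
      simp only [one_div]
      exact tendsto_inv_nhdsGT_zero.comp this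
    · filter_upwards [self_mem_nhdsWithin,
        Ioo_mem_nhdsGT_of_mem (by norm_num : (0:ℝ) ∈ Set.Ico 0 (1/2))] with a ha ha2
      have ha' : 0 < a := ha
      have hle : a < 1/2 := ha2.2
      rw [gTilde_eq a ha']
      have hsq : (1:ℝ) ≤ Real.sqrt ((a+2)/(3*a)) := by
        rw [show (1:ℝ) = Real.sqrt 1 by simp]
        apply Real.sqrt_le_sqrt
        rw [le_div_iff₀ (by positivity)]; linarith
      have p1 : 0 < 1+2*a-4*a^2 := by nlinarith
      have p2 : 0 < 3+2*a-4*a^2 := by nlinarith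
      have key2 : 1 ≤ 4*(a-1)^2*(2*a+1)^2 := by nlinarith [mul_pos p1 p2]
      have hco : 1/(18*a) ≤ (2*(a-1)^2*(2*a+1)^2)/(9*a) := by
        rw [div_le_div_iff₀ (by positivity) (by positivity)]
        nlinarith [key2]
      have h0 : 0 ≤ (2*(a-1)^2*(2*a+1)^2)/(9*a) := by positivity
      calc -(2*(a-1)^2*(2*a+1)^2)/(9*a) * Real.sqrt ((a+2)/(3*a))
          ≤ -(2*(a-1)^2*(2*a+1)^2)/(9*a) * 1 := by
            rw [neg_div]
            exact mul_le_mul_of_nonpos_left hsq (by linarith)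
        _ ≤ -(1/(18*a)) := by rw [neg_div, mul_one]; linarith
  · -- a → ∞ : for a ≥ 2, gTilde a ≤ -a/2
    apply tendsto_atBot_mono' _ (show ∀ᶠ a in atTop, gTilde a ≤ -(a/2) from ?_)
    · rw [tendsto_neg_atBot_iff]
      exact (tendsto_id (α := ℝ)).atTop_div_const (by norm_num)
    · filter_upwards [eventually_ge_atTop (2:ℝ)] with a ha
      have ha' : (0:ℝ) < a := by linarith
      rw [gTilde_eq a ha']
      have hsq := sqrt_half_le a ha'
      have hco : a ≤ (2*(a-1)^2*(2*a+1)^2)/(9*a) := by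
        rw [le_div_iff₀ (by positivity)]
        nlinarith [sq_nonneg (a-2)]
      calc -(2*(a-1)^2*(2*a+1)^2)/(9*a) * Real.sqrt ((a+2)/(3*a))
          ≤ -(2*(a-1)^2*(2*a+1)^2)/(9*a) * (1/2) := by
            rw [neg_div]
            exact mul_le_mul_of_nonpos_left hsq (by
              simp only [neg_nonpos]; positivity)
        _ ≤ -(a/2) := by rw [neg_div]; linarith
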